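/- arXiv:2212.10745 — 4 statements merged into one kernel-verified Lean document; each statement's English description precedes it below -/
import Mathlib

section
/- In a finite semidistributive lattice, every element admits a canonical join representation. -/
/-- `C` is a canonical join representation of `x`. -/
def IsCJR {L : Type*} [Lattice L] [OrderBot L] (x : L) (C : Finset L) : Prop :=
  C.sup id = x ∧
  (∀ C' : Finset L, C' ⊂ C → C'.sup id ≠ x) ∧
  (∀ U : Finset L, U.sup id = x → (∀ U' : Finset L, U' ⊂ U → U'.sup id ≠ x) →
    ∀ c ∈ C, ∃ u ∈ U, c ≤ u)

/-- Generalized join-semidistributivity: if `a ⊔ u = x` and `a ⊔ ⋁V = x`, then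
we may replace `u` by the elements `u ⊓ v`, `v ∈ V`. -/
lemma sd_replace {L : Type*} [Lattice L] [OrderBot L]
    (hSDj : ∀ a b c : L, a ⊔ b = a ⊔ c → a ⊔ b = a ⊔ (b ⊓ c))
    (x : L) (V : Finset L) :
    ∀ a u : L, a ⊔ u = x → a ⊔ V.sup id = x →
      a ⊔ V.sup (fun v => u ⊓ v) = x := by
  classical
  induction V using Finset.induction with
  | empty =>
      intro a u _ h2
      simpa using h2
  | @insert v0 V hv0 ih =>
      intro a u h1 h2
      rw [Finset.sup_insert] at h2
      simp only [id] at h2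
      have hax : a ≤ x := le_trans le_sup_left h1.le
      have hVx : V.sup id ≤ x := by
        calc V.sup id ≤ a ⊔ (v0 ⊔ V.sup id) := le_trans le_sup_right le_sup_right
        _ = x := h2
      have hA1 : (a ⊔ V.sup id) ⊔ u = x := by
        apply le_antisymm
        · exact sup_le (sup_le hax hVx) (le_trans le_sup_right h1.le)
        · rw [← h1]; exact sup_le (le_trans le_sup_left le_sup_left) le_sup_right
      have hA2 : (a ⊔ V.sup id) ⊔ v0 = x := by
        rw [← h2]; ac_rfl
      have hsd := hSDj (a ⊔ V.sup id) u v0 (hA1.trans hA2.symm)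
      have hx' : (a ⊔ (u ⊓ v0)) ⊔ V.sup id = x := by
        rw [← hA1, hsd]; ac_rfl
      have h1' : (a ⊔ (u ⊓ v0)) ⊔ u = x := by
        have huv : (u ⊓ v0) ⊔ u = u := sup_eq_right.mpr inf_le_left
        rw [sup_assoc, huv]; exact h1
      have := ih (a ⊔ (u ⊓ v0)) u h1' hx'
      rw [Finset.sup_insert, ← sup_assoc]
      exact this

/-- Replacing every element of `U` by its meets with elements of `V`. -/
lemma sd_meets {L : Type*} [Lattice L] [OrderBot L]
    (hSDj : ∀ a b c : L, a ⊔ b = a ⊔ c → a ⊔ b = a ⊔ (b ⊓ c))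
    (x : L) (V : Finset L) (hV : V.sup id = x) (U : Finset L) :
    ∀ a : L, a ⊔ U.sup id = x →
      a ⊔ U.sup (fun u => V.sup (fun v => u ⊓ v)) = x := by
  classical
  induction U using Finset.induction with
  | empty => intro a h; simpa using h
  | @insert u U hu ih =>
      intro a h
      rw [Finset.sup_insert] at h
      simp only [id] at h
      have hax : a ≤ x := le_trans le_sup_left h.le
      have hUx : U.sup id ≤ x := le_trans (le_trans le_sup_right le_sup_right) h.le
      have h1 : (a ⊔ U.sup id) ⊔ u = x := by
        rw [← h]; ac_rfl
      have h2 : (a ⊔ U.sup id) ⊔ V.sup id = x := by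
        rw [hV]
        exact sup_eq_right.mpr (sup_le hax hUx)
      have hrep := sd_replace hSDj x V (a ⊔ U.sup id) u h1 h2
      have h' : (a ⊔ V.sup (fun v => u ⊓ v)) ⊔ U.sup id = x := by
        rw [← hrep]; ac_rfl
      have := ih (a ⊔ V.sup (fun v => u ⊓ v)) h'
      rw [Finset.sup_insert, ← sup_assoc]
      exact this

/-- Any join representation can be pruned to an irredundant one. -/
lemma prune {L : Type*} [Lattice L] [OrderBot L] (x : L) :
    ∀ U : Finset L, U.sup id = x →
      ∃ W : Finset L, W ⊆ U ∧ W.sup id = x ∧ ∀ W' : Finset L, W' ⊂ W → W'.sup id ≠ x := by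
  classical
  intro U
  induction U using Finset.strongInduction with
  | _ U ih =>
    intro hU
    by_cases h : ∃ U' : Finset L, U' ⊂ U ∧ U'.sup id = x
    · obtain ⟨U', hss, hU'⟩ := h
      obtain ⟨W, hW1, hW2, hW3⟩ := ih U' hss hU'
      exact ⟨W, hW1.trans hss.subset, hW2, hW3⟩
    · exact ⟨U, subset_rfl, hU, fun W' hss hW' => h ⟨W', hss, hW'⟩⟩

/-- In a finite semidistributive lattice, every element admits a canonical join
representation. -/
theorem stmt4 {L : Type*} [Lattice L] [Fintype L] [OrderBot L]
    (hSDj : ∀ a b c : L, a ⊔ b = a ⊔ c → a ⊔ b = a ⊔ (b ⊓ c))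
    (hSDm : ∀ a b c : L, a ⊓ b = a ⊓ c → a ⊓ b = a ⊓ (b ⊔ c))
    (x : L) : ∃ C : Finset L, IsCJR x C := by
  classical
  -- refinement relation
  set refines : Finset L → Finset L → Prop :=
    fun A B => ∀ a ∈ A, ∃ b ∈ B, a ≤ b with hrefines
  have refines_refl : ∀ A, refines A A := fun A a ha => ⟨a, ha, le_rfl⟩
  have refines_trans : ∀ {A B C}, refines A B → refines B C → refines A C := by
    intro A B C hAB hBC a ha
    obtain ⟨b, hb, hab⟩ := hAB a ha
    obtain ⟨c, hc, hbc⟩ := hBC b hb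
    exact ⟨c, hc, hab.trans hbc⟩
  -- the set of irredundant representations of x
  set S : Set (Finset L) :=
    {U | U.sup id = x ∧ ∀ U' : Finset L, U' ⊂ U → U'.sup id ≠ x} with hS
  have hSne : S.Nonempty := by
    obtain ⟨W, _, hW2, hW3⟩ := prune x {x} (by simp)
    exact ⟨W, hW2, hW3⟩
  -- pick a representation minimal with respect to refinement
  obtain ⟨M, hM, hmin⟩ :=
    Set.Finite.exists_minimalFor (fun U => {A : Finset L | refines A U}) S
      (Set.toFinite S) hSne
  refine ⟨M, hM.1, hM.2, ?_⟩
  intro U hU1 hU2 c hc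
  -- common refinement of M and U
  have hmeets : (M.sup (fun m => U.sup (fun u => m ⊓ u))) = x := by
    have := sd_meets hSDj x U hU1 M ⊥ (by simpa using hM.1)
    simpa using this
  -- express as a Finset sup
  set P : Finset L := (M ×ˢ U).image (fun p => p.1 ⊓ p.2) with hP
  have hPsup : P.sup id = x := by
    rw [hP, Finset.sup_image]
    rw [Finset.sup_product_left]
    exact hmeets
  obtain ⟨W, hWP, hW2, hW3⟩ := prune x P hPsup
  have hWS : W ∈ S := ⟨hW2, hW3⟩
  have hWM : refines W M := by
    intro w hw
    obtain ⟨⟨m, u⟩, hmu, rfl⟩ := Finset.mem_image.mp (hWP hw)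
    exact ⟨m, (Finset.mem_product.mp hmu).1, inf_le_left⟩
  have hWU : refines W U := by
    intro w hw
    obtain ⟨⟨m, u⟩, hmu, rfl⟩ := Finset.mem_image.mp (hWP hw)
    exact ⟨u, (Finset.mem_product.mp hmu).2, inf_le_right⟩
  have hsub : {A : Finset L | refines A W} ≤ {A : Finset L | refines A M} := by
    intro A hA
    exact refines_trans hA hWM
  have heq : {A : Finset L | refines A M} = {A : Finset L | refines A W} :=
    le_antisymm (hmin hWS hsub) hsub
  have hMW : refines M W := by
    have : M ∈ {A : Finset L | refines A W} := by
      rw [← heq]; exact refines_refl M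
    exact this
  exact refines_trans hMW hWU c hc
end

section
/- In a finite join-semidistributive lattice, for every covering relation a ⋗ b, the set {x : b ∨ x = a} has a minimum element. -/
/-- In a finite join-semidistributive lattice, for every covering relation `b ⋖ a`,
the set `{x | b ⊔ x = a}` has a minimum element. -/
theorem stmt6 {L : Type*} [Lattice L] [Fintype L]
    (hsd : ∀ a b c : L, a ⊔ b = a ⊔ c → a ⊔ b = a ⊔ (b ⊓ c))
    (a b : L) (hab : b ⋖ a) : ∃ j : L, IsLeast {x : L | b ⊔ x = a} j := by
  classical
  set S : Set L := {x : L | b ⊔ x = a} with hS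
  have hclosed : ∀ x ∈ S, ∀ y ∈ S, x ⊓ y ∈ S := by
    intro x hx y hy
    have h := hsd b x y (hx.trans hy.symm)
    exact h.symm.trans hx
  have haS : a ∈ S := by simp [hS, sup_eq_right.mpr hab.1.le]
  have hne : (Finset.univ.filter (· ∈ S)).Nonempty :=
    ⟨a, by simp [haS]⟩
  refine ⟨(Finset.univ.filter (· ∈ S)).inf' hne id, ?_, ?_⟩
  · exact Finset.inf'_mem S hclosed _ hne id (fun i hi => (Finset.mem_filter.mp hi).2)
  · intro x hx
    exact Finset.inf'_le id (by simp [hx])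
end

section
/- Let L be a finite lattice, j a join-irreducible element with unique lower cover j*, and a ⋗ b a covering relation. If b ∨ j = a and b ∧ j = j*, then j is the minimum of {x ∈ L : b ∨ x = a}. -/
/-- Let `j` be join-irreducible with unique lower cover `j*`, and `b ⋖ a` a covering
relation with `b ⊔ j = a` and `b ⊓ j = j*`. Then `j` is the minimum of
`{x | b ⊔ x = a}` (we assume join-semidistributivity, as permitted). -/
theorem stmt7 {L : Type*} [Lattice L] [Fintype L] [OrderBot L]
    (hsd : ∀ a b c : L, a ⊔ b = a ⊔ c → a ⊔ b = a ⊔ (b ⊓ c))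
    (j jstar a b : L) (hj : SupIrred j)
    (hcov : jstar ⋖ j) (huniq : ∀ y : L, y ⋖ j → y = jstar)
    (hab : b ⋖ a) (h1 : b ⊔ j = a) (h2 : b ⊓ j = jstar) :
    IsLeast {x : L | b ⊔ x = a} j := by
  refine ⟨h1, fun x hx => ?_⟩
  by_contra hjx
  -- j ⊓ x < j
  have hlt : j ⊓ x < j := lt_of_le_of_ne inf_le_left (fun h => hjx (h ▸ inf_le_right))
  -- hence j ⊓ x ≤ jstar
  obtain ⟨y, hy1, hy2⟩ := hlt.exists_le_covby
  have hle : j ⊓ x ≤ jstar := (huniq y hy2) ▸ hy1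
  have := hsd b j x (by rw [h1, hx])
  have hbj : b ⊔ (j ⊓ x) = b :=
    sup_eq_left.mpr (hle.trans (h2 ▸ inf_le_left))
  rw [hbj] at this
  exact hab.lt.ne (by rw [← h1, this])
end

section
/- In a finite semidistributive lattice L, the canonical join representation of an element x is x = ⋁_{x ⋗ y} γ(x → y), where γ(x → y) is the minimum element of {z : y ∨ z = x}, the join taken over all elements y covered by x. -/
/-- In a finite semidistributive lattice, the canonical join representation of `x`
is `x = ⋁_{x ⋗ y} γ(x → y)`, where `γ(x → y)` is the minimum of `{z | y ⊔ z = x}`. -/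
theorem stmt17 {L : Type*} [Lattice L] [Fintype L] [OrderBot L]
    (hSDj : ∀ a b c : L, a ⊔ b = a ⊔ c → a ⊔ b = a ⊔ (b ⊓ c))
    (hSDm : ∀ a b c : L, a ⊓ b = a ⊓ c → a ⊓ b = a ⊓ (b ⊔ c))
    (x : L) (γ : L → L)
    (hγ : ∀ y : L, y ⋖ x → IsLeast {z : L | y ⊔ z = x} (γ y))
    (C : Finset L) (hC : ∀ c : L, c ∈ C ↔ ∃ y : L, y ⋖ x ∧ c = γ y) :
    IsCJR x C := by
  have hγx : ∀ y : L, y ⋖ x → y ⊔ γ y = x := fun y hy => (hγ y hy).1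
  -- the join of a cover with anything not below it is x
  have hkey : ∀ y : L, y ⋖ x → ∀ u : L, u ≤ x → ¬ u ≤ y → y ⊔ u = x := by
    intro y hy u hux huy
    rcases hy.eq_or_eq (c := y ⊔ u) le_sup_left (sup_le hy.le hux) with h | h
    · exact absurd (le_sup_right.trans h.le) huy
    · exact h
  have hγle : ∀ y : L, y ⋖ x → γ y ≤ x := fun y hy =>
    le_sup_right.trans (hγx y hy).le
  have hsup : C.sup id = x := by
    have hle : C.sup id ≤ x := by
      apply Finset.sup_le
      intro c hc
      obtain ⟨y, hy, rfl⟩ := (hC c).1 hc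
      exact hγle y hy
    rcases eq_or_lt_of_le hle with h | h
    · exact h
    · exfalso
      obtain ⟨y, hxy, hyx⟩ := exists_le_covBy_of_lt h
      have hmem : γ y ∈ C := (hC _).2 ⟨y, hyx, rfl⟩
      have hgy : γ y ≤ y := (Finset.le_sup (f := id) hmem).trans hxy
      have : y = x := by
        rw [← hγx y hyx, sup_eq_left.mpr hgy]
      exact hyx.lt.ne this
  refine ⟨hsup, ?_, ?_⟩
  · intro C' hss hsup'
    obtain ⟨c, hcC, hcC'⟩ := Finset.exists_of_ssubset hss
    obtain ⟨y, hy, rfl⟩ := (hC c).1 hcC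
    have hle : C'.sup id ≤ y := by
      apply Finset.sup_le
      intro c' hc'
      obtain ⟨y', hy', rfl⟩ := (hC c').1 (hss.subset hc')
      have hne : y' ≠ y := by
        rintro rfl; exact hcC' hc'
      -- distinct covers join to x, so γ y' ≤ y
      have : y' ⊔ y = x := by
        apply hkey y' hy' y hy.le
        intro hle
        rcases lt_or_eq_of_le hle with h | h
        · exact hy.2 h hy'.lt
        · exact hne h.symm
      exact (hγ y' hy').2 this
    rw [hsup'] at hle
    exact hy.lt.not_ge hle
  · intro U hU _ c hc
    obtain ⟨y, hy, rfl⟩ := (hC c).1 hc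
    have : ¬ U.sup id ≤ y := by
      rw [hU]; exact hy.lt.not_ge
    rw [Finset.sup_le_iff] at this
    push_neg at this
    obtain ⟨u, huU, huy⟩ := this
    have hux : u ≤ x := hU ▸ Finset.le_sup (f := id) huU
    exact ⟨u, huU, (hγ y hy).2 (hkey y hy u hux huy)⟩
end
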